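/- Let G be a finite connected weighted graph and let p, q, s, t be vertices of G with p ≠ q. Then r_G(s,t) = r_{G_{pq}}(s,t) + (1/r_G(p,q))·( j_p(q,s) − j_p(q,t) )². In particular r_G(s,t) ≥ r_{G_{pq}}(s,t), with equality if and only if j_p(q,s) = j_p(q,t). -/

import Mathlib

open scoped Classical

/-- A finite weighted multigraph (resistive electrical network): finitely many
vertices and edges; each edge `e` has two endpoints `ends e` and a positive
length (resistance) `len e`.  Multiple edges and self-loops are allowed. -/
structure WMG where
  V : Type
  E : Type
  instV : Fintype V
  instE : Fintype E
  ends : E → V × V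
  len : E → ℝ
  len_pos : ∀ e, 0 < len e

attribute [instance] WMG.instV WMG.instE

/-- The Moore–Penrose pseudoinverse of a real square matrix, characterized by
the four Penrose equations (it exists and is unique for real matrices). -/
noncomputable def Matrix.mpinv {n : Type} [Fintype n] (A : Matrix n n ℝ) : Matrix n n ℝ :=
  if h : ∃ B : Matrix n n ℝ,
      A * B * A = A ∧ B * A * B = B ∧ Matrix.transpose (A * B) = A * B ∧ Matrix.transpose (B * A) = B * A
  then h.choose else 0

namespace WMG

/-- Indicator function. -/
noncomputable def ind {α : Type} (x y : α) : ℝ := if x = y then 1 else 0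

/-- The weighted Laplacian: an edge `e` with endpoints `a, b` contributes
`(1/len e) * (δ_{ua} - δ_{ub}) * (δ_{va} - δ_{vb})` to the `(u,v)` entry.  So
the off-diagonal `(u,v)` entry is `-∑ 1/len e` over the edges joining `u` and
`v`, and all row sums are zero. -/
noncomputable def lap (G : WMG) : Matrix G.V G.V ℝ :=
  ∑ e : G.E, (G.len e)⁻¹ •
    Matrix.of (fun u v : G.V =>
      (ind u (G.ends e).1 - ind u (G.ends e).2) *
      (ind v (G.ends e).1 - ind v (G.ends e).2))

/-- Effective resistance `r(p,q) = L⁺pp - 2·L⁺pq + L⁺qq`. -/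
noncomputable def res (G : WMG) (p q : G.V) : ℝ :=
  G.lap.mpinv p p - 2 * G.lap.mpinv p q + G.lap.mpinv q q

/-- Voltage function `j_p(q,s) = L⁺pp - L⁺pq - L⁺ps + L⁺qs`. -/
noncomputable def volt (G : WMG) (p q s : G.V) : ℝ :=
  G.lap.mpinv p p - G.lap.mpinv p q - G.lap.mpinv p s + G.lap.mpinv q s

/-- Two vertices are adjacent if some edge has them as its endpoints. -/
def Adj (G : WMG) (u v : G.V) : Prop :=
  ∃ e : G.E, G.ends e = (u, v) ∨ G.ends e = (v, u)

/-- `u` and `v` are joined by a walk in `G`. -/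
def Reach (G : WMG) (u v : G.V) : Prop := Relation.ReflTransGen G.Adj u v

/-- `G` is connected. -/
def Connected (G : WMG) : Prop := Nonempty G.V ∧ ∀ u v : G.V, G.Reach u v

/-- Quotient graph: identify vertices along (the equivalence generated by) the
relation `r`; all edges are kept. -/
noncomputable def quot (G : WMG) (r : G.V → G.V → Prop) : WMG where
  V := Quot r
  E := G.E
  instV := Fintype.ofFinite _
  instE := G.instE
  ends e := (Quot.mk r (G.ends e).1, Quot.mk r (G.ends e).2)
  len := G.len
  len_pos := G.len_pos

/-- The canonical map from the vertices of `G` to those of a quotient of `G`. -/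
def quotMap (G : WMG) (r : G.V → G.V → Prop) : G.V → (G.quot r).V := Quot.mk r

/-- `G_{pq}`: identify the vertices `p` and `q`. -/
noncomputable def ident2 (G : WMG) (p q : G.V) : WMG :=
  G.quot (fun x y => x = p ∧ y = q)

def ident2Map (G : WMG) (p q : G.V) : G.V → (G.ident2 p q).V :=
  G.quotMap _

/-- `G_{pqs}`: identify the vertices `p`, `q`, `s` into a single vertex. -/
noncomputable def ident3 (G : WMG) (p q s : G.V) : WMG :=
  G.quot (fun x y => (x = p ∧ y = q) ∨ (x = p ∧ y = s))

/-- `G_{pq,st}`: identify `p` with `q` and, separately, `s` with `t`. -/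
noncomputable def ident22 (G : WMG) (p q s t : G.V) : WMG :=
  G.quot (fun x y => (x = p ∧ y = q) ∨ (x = s ∧ y = t))

/-- `G_S`: identify all vertices in the set `S` into a single vertex. -/
noncomputable def identSet (G : WMG) (S : Set G.V) : WMG :=
  G.quot (fun x y => x ∈ S ∧ y ∈ S)

/-- `G − e`: delete the edge `e` (keeping all vertices). -/
noncomputable def delete (G : WMG) (e : G.E) : WMG where
  V := G.V
  E := {f : G.E // f ≠ e}
  instV := G.instV
  instE := Fintype.ofFinite _
  ends f := G.ends f.1
  len f := G.len f.1
  len_pos f := G.len_pos f.1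

/-- `e` is a bridge if `G − e` is disconnected. -/
def IsBridge (G : WMG) (e : G.E) : Prop := ¬ (G.delete e).Connected

/-- `Ḡ_e`: contract the edge `e` (identify its endpoints and delete it). -/
noncomputable def contract (G : WMG) (e : G.E) : WMG :=
  (G.delete e).quot (fun x y => x = (G.ends e).1 ∧ y = (G.ends e).2)

def contractMap (G : WMG) (e : G.E) : G.V → (G.contract e).V := Quot.mk _

/-- Replace the length of the edge `e` by `L'`. -/
noncomputable def setLen (G : WMG) (e : G.E) (L' : ℝ) (hL' : 0 < L') : WMG where
  V := G.V
  E := G.E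
  instV := G.instV
  instE := G.instE
  ends := G.ends
  len f := if f = e then L' else G.len f
  len_pos f := by
    by_cases hf : f = e
    · simpa [hf] using hL'
    · simpa [hf] using G.len_pos f

/-- `T` is (the edge set of) a spanning tree of `G`: using only edges of `T`
any two vertices are joined, and `T` has (number of vertices) − 1 edges. -/
def IsSpanningTree (G : WMG) (T : Finset G.E) : Prop :=
  (∀ u v : G.V, Relation.ReflTransGen
      (fun x y => ∃ e ∈ T, G.ends e = (x, y) ∨ G.ends e = (y, x)) u v) ∧
  T.card = Fintype.card G.V - 1

/-- `t G`: the number of spanning trees of `G` (equals `1` for a one-vertex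
graph; self-loops contribute nothing). -/
noncomputable def t (G : WMG) : ℕ := Nat.card {T : Finset G.E // G.IsSpanningTree T}

/-- `t(G_{pq})`, with the convention `t(G_{pp}) = 0`. -/
noncomputable def t2 (G : WMG) (p q : G.V) : ℕ :=
  if p = q then 0 else (G.ident2 p q).t

/-- Disjoint union of two graphs. -/
noncomputable def disjUnion (G₁ G₂ : WMG) : WMG where
  V := G₁.V ⊕ G₂.V
  E := G₁.E ⊕ G₂.E
  instV := inferInstance
  instE := inferInstance
  ends := Sum.elim (fun e => (Sum.inl (G₁.ends e).1, Sum.inl (G₁.ends e).2))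
                   (fun e => (Sum.inr (G₂.ends e).1, Sum.inr (G₂.ends e).2))
  len := Sum.elim G₁.len G₂.len
  len_pos := by
    rintro (e | e)
    · exact G₁.len_pos e
    · exact G₂.len_pos e

/-- Glue `G₁` and `G₂` along two pairs of vertices (`p₁ ↔ p₂`, `q₁ ↔ q₂`):
the result is the graph `G = G₁ ∪ G₂` with `G₁ ∩ G₂ = {p, q}` (the two pieces
share exactly these two vertices and no edges). -/
noncomputable def glue2 (G₁ G₂ : WMG) (p₁ q₁ : G₁.V) (p₂ q₂ : G₂.V) : WMG :=
  (G₁.disjUnion G₂).quot (fun x y =>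
    (x = Sum.inl p₁ ∧ y = Sum.inr p₂) ∨ (x = Sum.inl q₁ ∧ y = Sum.inr q₂))

/-- Glue `G₁` and `G₂` along three pairs of vertices: the result is the graph
`G = G₁ ∪ G₂` with `G₁ ∩ G₂ = {p, q, s}`. -/
noncomputable def glue3 (G₁ G₂ : WMG) (p₁ q₁ s₁ : G₁.V) (p₂ q₂ s₂ : G₂.V) : WMG :=
  (G₁.disjUnion G₂).quot (fun x y =>
    (x = Sum.inl p₁ ∧ y = Sum.inr p₂) ∨ (x = Sum.inl q₁ ∧ y = Sum.inr q₂) ∨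
    (x = Sum.inl s₁ ∧ y = Sum.inr s₂))

/-- Disjoint union of a finite family of graphs. -/
noncomputable def sigmaGraph {k : ℕ} (G : Fin k → WMG) : WMG where
  V := Σ i, (G i).V
  E := Σ i, (G i).E
  instV := inferInstance
  instE := inferInstance
  ends e := (⟨e.1, ((G e.1).ends e.2).1⟩, ⟨e.1, ((G e.1).ends e.2).2⟩)
  len e := (G e.1).len e.2
  len_pos e := (G e.1).len_pos e.2

/-- Glue the family `G i` along a common pair of vertices (all the `p i` are
identified together, and all the `q i` are identified together): the result is
`G = ⋃ G_i` with `G_i ∩ G_j = {p, q}` for all `i ≠ j`. -/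
noncomputable def glueFam {k : ℕ} (G : Fin k → WMG) (p q : ∀ i, (G i).V) : WMG :=
  (sigmaGraph G).quot (fun x y =>
    (∃ i j, x = ⟨i, p i⟩ ∧ y = ⟨j, p j⟩) ∨ (∃ i j, x = ⟨i, q i⟩ ∧ y = ⟨j, q j⟩))

/-- The cyclic successor on `Fin k`. -/
def finSucc {k : ℕ} (i : Fin k) : Fin k :=
  ⟨(i.1 + 1) % k, Nat.mod_lt _ (Nat.lt_of_le_of_lt (Nat.zero_le _) i.2)⟩

/-- `CG_k`: replace the `i`-th edge of the cycle `C_k` by the graph `G i`,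
identifying `t i` (of `G i`) with `s (i+1)` (of `G (i+1)`), cyclically. -/
noncomputable def cycleGlue {k : ℕ} (G : Fin k → WMG) (s t : ∀ i, (G i).V) : WMG :=
  (sigmaGraph G).quot (fun x y =>
    ∃ i, x = ⟨i, t i⟩ ∧ y = ⟨finSucc i, s (finSucc i)⟩)

/-- Join a new vertex `u` (the vertex `none`) to the vertex `p i` of `H` by
`a i` parallel unit edges, for each `i`.  The resulting graph `G` has `H = G − u`,
and if `p` is injective with all `a i ≥ 1` then `N_G(u) = {p 1, …, p n}` with
`a i` parallel edges joining `u` to `p i`. -/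
noncomputable def cone (H : WMG) {n : ℕ} (p : Fin n → H.V) (a : Fin n → ℕ) : WMG where
  V := Option H.V
  E := H.E ⊕ (Σ i : Fin n, Fin (a i))
  instV := inferInstance
  instE := inferInstance
  ends := Sum.elim (fun e => (some (H.ends e).1, some (H.ends e).2))
                   (fun e => (none, some (p e.1)))
  len := Sum.elim H.len (fun _ => 1)
  len_pos := by
    rintro (e | e)
    · exact H.len_pos e
    · exact one_pos

/-- The path graph `P_n` on `n` vertices `0, 1, …, n-1`, unit edge lengths. -/
noncomputable def path (n : ℕ) : WMG where
  V := Fin n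
  E := Fin (n - 1)
  instV := inferInstance
  instE := inferInstance
  ends i := (⟨i.1, by have := i.2; omega⟩, ⟨i.1 + 1, by have := i.2; omega⟩)
  len _ := 1
  len_pos _ := one_pos

/-- The cycle graph `C_n` on `n` vertices, unit edge lengths. -/
noncomputable def cycle (n : ℕ) : WMG where
  V := Fin n
  E := Fin n
  instV := inferInstance
  instE := inferInstance
  ends i := (i, finSucc i)
  len _ := 1
  len_pos _ := one_pos

/-- The modified fan graph `F̄an_n`: the path `P_n` together with one new hub
vertex joined to each path vertex by `a` parallel edges. -/
noncomputable def fanGraph (n a : ℕ) : WMG :=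
  (path n).cone (fun i : Fin n => i) (fun _ => a)

/-- The modified wheel graph `W̄_n`: the cycle `C_n` together with one new hub
vertex joined to each cycle vertex by `a` parallel edges. -/
noncomputable def wheelGraph (n a : ℕ) : WMG :=
  (cycle n).cone (fun i : Fin n => i) (fun _ => a)

end WMG

/-- The Morgan–Voyce polynomial `B_m(x) = ∑_{k=0}^m C(m+k+1, m−k) x^k`. -/
noncomputable def morganVoyce (m : ℕ) (x : ℝ) : ℝ :=
  ∑ k ∈ Finset.range (m + 1), (Nat.choose (m + k + 1) (m - k) : ℝ) * x ^ k

/-- The polynomial `W_m(x) = ∑_{k=0}^m ((2m+2)/(m+2+k)) C(m+2+k, m−k) x^k`. -/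
noncomputable def wheelPoly (m : ℕ) (x : ℝ) : ℝ :=
  ∑ k ∈ Finset.range (m + 1),
    ((2 * m + 2 : ℝ) / (m + 2 + k : ℝ)) * (Nat.choose (m + 2 + k) (m - k) : ℝ) * x ^ k

/-- The Lucas numbers: `L₀ = 2`, `L₁ = 1`, `L_{m+2} = L_m + L_{m+1}`
(so `L₂ = 3`). -/
def lucas : ℕ → ℕ
  | 0 => 2
  | 1 => 1
  | n + 2 => lucas n + lucas (n + 1)

/-!
Let `L⁺` be the pseudoinverse of the Laplacian `L`. On a connected network the solutions of
`L x = δ_a - δ_b` differ by constants, so each of them has `x a - x b = r(a,b)`. Let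
`f = L⁺(δ_s - δ_t)` and `g = L⁺(δ_p - δ_q)`. Subtracting `c • g` with
`c = (f p - f q) / r(p,q)` from `f` makes `p` and `q` equipotential, so `x = f - c • g` descends
to `G_{pq}`, where it solves `L x = δ_s - δ_t`. Hence
`r_{G_{pq}}(s,t) = x s - x t = r(s,t) - c (g s - g t)`, and reciprocity (symmetry of `L⁺`)
gives `g s - g t = f p - f q = j_p(q,t) - j_p(q,s)`.
-/

namespace Matrix

variable {n : Type} [Fintype n]

def IsMoorePenroseInverse (A B : Matrix n n ℝ) : Prop :=
  A * B * A = A ∧ B * A * B = B ∧ (A * B)ᵀ = A * B ∧ (B * A)ᵀ = B * A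

theorem IsMoorePenroseInverse.unique {A B C : Matrix n n ℝ}
    (hB : A.IsMoorePenroseInverse B) (hC : A.IsMoorePenroseInverse C) : B = C := by
  obtain ⟨b1, b2, b3, b4⟩ := hB
  obtain ⟨c1, c2, c3, c4⟩ := hC
  have e1 : Aᵀ = Aᵀ * (A * C) := by
    conv_lhs => rw [← c1]
    rw [transpose_mul, c3]
  have e2 : Aᵀ = (C * A) * Aᵀ := by
    conv_lhs => rw [← c1]
    rw [mul_assoc, transpose_mul, c4]
  have hAB : A * B = A * C := by
    calc A * B = Bᵀ * Aᵀ := by rw [← transpose_mul, b3]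
    _ = Bᵀ * Aᵀ * (A * C) := by conv_lhs => rw [e1, ← mul_assoc]
    _ = (A * B) * (A * C) := by rw [← transpose_mul, b3]
    _ = A * C := by rw [← mul_assoc, b1]
  have hBA : B * A = C * A := by
    calc B * A = Aᵀ * Bᵀ := by rw [← transpose_mul, b4]
    _ = (C * A) * (Aᵀ * Bᵀ) := by conv_lhs => rw [e2, mul_assoc]
    _ = (C * A) * (B * A) := by rw [← transpose_mul, b4]
    _ = C * A := by rw [mul_assoc, ← mul_assoc A, b1]
  calc B = B * A * B := b2.symm
  _ = C * A * B := by rw [hBA]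
  _ = C * (A * C) := by rw [mul_assoc, hAB]
  _ = C := by rw [← mul_assoc, c2]

-- Relies on `0⁻¹ = 0`.
theorem isMoorePenroseInverse_diagonal (d : n → ℝ) :
    (diagonal d).IsMoorePenroseInverse (diagonal d⁻¹) := by
  refine ⟨?_, ?_, ?_, ?_⟩ <;> simp only [diagonal_mul_diagonal, diagonal_transpose] <;>
    congr 1 with i
  · exact mul_inv_mul_cancel (d i)
  · simpa using mul_inv_mul_cancel (d i)⁻¹

theorem IsMoorePenroseInverse.map {A B : Matrix n n ℝ} (h : A.IsMoorePenroseInverse B)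
    (φ : Matrix n n ℝ ≃⋆ₐ[ℝ] Matrix n n ℝ) : (φ A).IsMoorePenroseInverse (φ B) := by
  have hφ : ∀ M, (φ M)ᵀ = φ Mᵀ := fun M => by
    simpa only [star_eq_conjTranspose, conjTranspose_eq_transpose_of_trivial] using
      (map_star φ M).symm
  obtain ⟨h1, h2, h3, h4⟩ := h
  refine ⟨?_, ?_, ?_, ?_⟩ <;> simp only [← map_mul, hφ, h1, h2, h3, h4]

theorem IsSymm.exists_isMoorePenroseInverse {A : Matrix n n ℝ} (hA : A.IsSymm) :
    ∃ B, A.IsMoorePenroseInverse B := by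
  have hH : A.IsHermitian := isHermitian_iff_isSymm.mpr hA
  have h := (isMoorePenroseInverse_diagonal (RCLike.ofReal ∘ hH.eigenvalues)).map
    (Unitary.conjStarAlgAut ℝ _ hH.eigenvectorUnitary)
  rw [← hH.spectral_theorem] at h
  exact ⟨_, h⟩

theorem IsSymm.isMoorePenroseInverse_mpinv {A : Matrix n n ℝ} (hA : A.IsSymm) :
    A.IsMoorePenroseInverse A.mpinv := by
  unfold Matrix.mpinv
  split_ifs with h
  · exact h.choose_spec
  · exact absurd hA.exists_isMoorePenroseInverse h

theorem IsSymm.mpinv {A : Matrix n n ℝ} (hA : A.IsSymm) : A.mpinv.IsSymm := by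
  obtain ⟨b1, b2, b3, b4⟩ := hA.isMoorePenroseInverse_mpinv
  set B := A.mpinv
  have hA' : Aᵀ = A := hA.eq
  have hABt : A * Bᵀ = B * A := by rw [← b4, transpose_mul, hA']
  have hBtA : Bᵀ * A = A * B := by rw [← b3, transpose_mul, hA']
  refine (hA.isMoorePenroseInverse_mpinv.unique (C := Bᵀ) ⟨?_, ?_, ?_, ?_⟩).symm
  · calc A * Bᵀ * A = (A * B * A)ᵀ := by simp only [transpose_mul, hA', mul_assoc]
    _ = A := by rw [b1, hA']
  · calc Bᵀ * A * Bᵀ = (B * A * B)ᵀ := by simp only [transpose_mul, hA', mul_assoc]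
    _ = Bᵀ := by rw [b2]
  · rw [hABt, b4]
  · rw [hBtA, b3]

theorem IsSymm.mulVec_mpinv_mulVec {A : Matrix n n ℝ} (hA : A.IsSymm) {y : n → ℝ}
    (hy : ∀ z, A *ᵥ z = 0 → y ⬝ᵥ z = 0) : A *ᵥ (A.mpinv *ᵥ y) = y := by
  obtain ⟨b1, -, b3, b4⟩ := hA.isMoorePenroseInverse_mpinv
  set B := A.mpinv
  have hcomm : A * B = B * A := by rw [← b3, transpose_mul, hA.mpinv.eq, hA.eq]
  -- `u = y - B A y` lies in `ker A`, so `u ⊥ y`; and `u ⊥ B A y` because `B A` is symmetric.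
  set u := y - (B * A) *ᵥ y
  have hAu : A *ᵥ u = 0 := by
    rw [mulVec_sub, mulVec_mulVec, ← mul_assoc, b1, sub_self]
  have hBAu : ((B * A) *ᵥ y) ⬝ᵥ u = 0 := by
    rw [dotProduct_comm, dotProduct_mulVec, ← mulVec_transpose, b4, ← mulVec_mulVec,
      hAu, mulVec_zero, zero_dotProduct]
  have hu : u ⬝ᵥ u = 0 := by
    calc u ⬝ᵥ u = y ⬝ᵥ u - ((B * A) *ᵥ y) ⬝ᵥ u := sub_dotProduct _ _ _
    _ = 0 := by rw [hy u hAu, hBAu, sub_zero]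
  rw [mulVec_mulVec, hcomm, ← sub_eq_zero.mp (dotProduct_self_eq_zero.mp hu)]

end Matrix

namespace WMG

open Matrix

noncomputable def dipole {α : Type} (a b u : α) : ℝ := ind u a - ind u b

lemma dipole_self {α : Type} (a : α) : dipole a a = 0 := by
  funext u; simp [dipole]

section Dipole

variable {α : Type} [Fintype α]

lemma dipole_dotProduct (a b : α) (z : α → ℝ) : dipole a b ⬝ᵥ z = z a - z b := by
  simp [dotProduct, dipole, ind, sub_mul, Finset.sum_sub_distrib]

lemma mulVec_dipole (M : Matrix α α ℝ) (a b v : α) :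
    (M *ᵥ dipole a b) v = M v a - M v b := by
  rw [mulVec, dotProduct_comm, dipole_dotProduct]

lemma sum_filter_dipole {β : Type} (f : α → β) (a b : α) (w : β) :
    ∑ v with f v = w, dipole a b v = dipole (f a) (f b) w := by
  simp [dipole, ind, Finset.sum_sub_distrib, eq_comm]

end Dipole

variable (G : WMG)

lemma lap_isSymm : G.lap.IsSymm := by
  ext i j
  simp only [lap, transpose_apply, Matrix.sum_apply, Matrix.smul_apply, of_apply, smul_eq_mul]
  exact Finset.sum_congr rfl fun e _ => by ring

lemma lap_mulVec_apply (z : G.V → ℝ) (v : G.V) :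
    (G.lap *ᵥ z) v = ∑ e, (G.len e)⁻¹ *
      (dipole (G.ends e).1 (G.ends e).2 v * (z (G.ends e).1 - z (G.ends e).2)) := by
  simp only [mulVec, dotProduct, lap, Matrix.sum_apply, Matrix.smul_apply, of_apply, smul_eq_mul,
    Finset.sum_mul]
  rw [Finset.sum_comm]
  refine Finset.sum_congr rfl fun e _ => ?_
  calc _ = (G.len e)⁻¹ * dipole (G.ends e).1 (G.ends e).2 v *
        (dipole (G.ends e).1 (G.ends e).2 ⬝ᵥ z) := by
        rw [dotProduct, Finset.mul_sum]
        exact Finset.sum_congr rfl fun u _ => by simp only [dipole]; ring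
    _ = _ := by rw [dipole_dotProduct]; ring

lemma dotProduct_lap_mulVec (z : G.V → ℝ) :
    z ⬝ᵥ (G.lap *ᵥ z) = ∑ e, (G.len e)⁻¹ * (z (G.ends e).1 - z (G.ends e).2) ^ 2 := by
  simp only [dotProduct, lap_mulVec_apply, Finset.mul_sum]
  rw [Finset.sum_comm]
  refine Finset.sum_congr rfl fun e _ => ?_
  calc ∑ v, z v * ((G.len e)⁻¹ *
        (dipole (G.ends e).1 (G.ends e).2 v * (z (G.ends e).1 - z (G.ends e).2)))
      = (G.len e)⁻¹ * (z (G.ends e).1 - z (G.ends e).2) *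
          (dipole (G.ends e).1 (G.ends e).2 ⬝ᵥ z) := by
        rw [dotProduct, Finset.mul_sum]
        exact Finset.sum_congr rfl fun v _ => by ring
    _ = (G.len e)⁻¹ * (z (G.ends e).1 - z (G.ends e).2) ^ 2 := by
        rw [dipole_dotProduct]; ring

lemma dotProduct_lap_mulVec_nonneg (z : G.V → ℝ) : 0 ≤ z ⬝ᵥ (G.lap *ᵥ z) := by
  rw [dotProduct_lap_mulVec]
  exact Finset.sum_nonneg fun e _ => mul_nonneg (inv_nonneg.mpr (G.len_pos e).le) (sq_nonneg _)

lemma eq_of_dotProduct_lap_mulVec_eq_zero {z : G.V → ℝ} (hz : z ⬝ᵥ (G.lap *ᵥ z) = 0)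
    (e : G.E) : z (G.ends e).1 = z (G.ends e).2 := by
  rw [dotProduct_lap_mulVec, Finset.sum_eq_zero_iff_of_nonneg fun e _ =>
    mul_nonneg (inv_nonneg.mpr (G.len_pos e).le) (sq_nonneg _)] at hz
  have he := hz e (Finset.mem_univ e)
  rw [mul_eq_zero, inv_eq_zero, pow_eq_zero_iff two_ne_zero, sub_eq_zero] at he
  exact he.resolve_left (G.len_pos e).ne'

lemma lap_mulVec_eq_zero_of_forall_eq {z : G.V → ℝ}
    (hz : ∀ e, z (G.ends e).1 = z (G.ends e).2) : G.lap *ᵥ z = 0 := by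
  funext v
  rw [lap_mulVec_apply, Pi.zero_apply]
  exact Finset.sum_eq_zero fun e _ => by rw [hz e, sub_self, mul_zero, mul_zero]

noncomputable def potential (a b : G.V) : G.V → ℝ := G.lap.mpinv *ᵥ dipole a b

lemma potential_apply (a b v : G.V) :
    G.potential a b v = G.lap.mpinv v a - G.lap.mpinv v b :=
  mulVec_dipole _ a b v

lemma res_eq_potential_sub (a b : G.V) :
    G.res a b = G.potential a b a - G.potential a b b := by
  rw [res, potential_apply, potential_apply, G.lap_isSymm.mpinv.apply a b]
  ring

lemma potential_sub_potential_comm (a b c d : G.V) :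
    G.potential a b c - G.potential a b d = G.potential c d a - G.potential c d b := by
  simp only [potential_apply, G.lap_isSymm.mpinv.apply a, G.lap_isSymm.mpinv.apply b]
  ring

lemma volt_sub_volt (p q s t : G.V) :
    G.volt p q s - G.volt p q t = G.potential s t q - G.potential s t p := by
  simp only [volt, potential_apply]
  ring

variable {G}

lemma Connected.eq_of_lap_mulVec_eq_zero (hG : G.Connected) {z : G.V → ℝ}
    (hz : G.lap *ᵥ z = 0) (u v : G.V) : z u = z v := by
  have hedge := G.eq_of_dotProduct_lap_mulVec_eq_zero (by rw [hz, dotProduct_zero])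
  induction hG.2 u v with
  | refl => rfl
  | tail _ hadj ih =>
    obtain ⟨e, he | he⟩ := hadj
    · exact ih.trans (by simpa [he] using hedge e)
    · exact ih.trans (by simpa [he] using (hedge e).symm)

lemma Connected.quot (hG : G.Connected) (r : G.V → G.V → Prop) : (G.quot r).Connected := by
  refine ⟨⟨G.quotMap r hG.1.some⟩, fun u' v' => ?_⟩
  obtain ⟨u, rfl⟩ := Quot.exists_rep u'
  obtain ⟨v, rfl⟩ := Quot.exists_rep v'
  refine Relation.ReflTransGen.lift (G.quotMap r) ?_ u v (hG.2 u v)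
  rintro a b ⟨e, he | he⟩
  · exact ⟨e, Or.inl (by simp [WMG.quot, he, quotMap])⟩
  · exact ⟨e, Or.inr (by simp [WMG.quot, he, quotMap])⟩

lemma quot_lap_mulVec_lift (r : G.V → G.V → Prop) (x : G.V → ℝ)
    (hx : ∀ a b, r a b → x a = x b) (w : (G.quot r).V) :
    ((G.quot r).lap *ᵥ Quot.lift x hx) w = ∑ v with G.quotMap r v = w, (G.lap *ᵥ x) v := by
  rw [lap_mulVec_apply (G.quot r) (Quot.lift x hx)]
  simp only [lap_mulVec_apply]
  rw [Finset.sum_comm]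
  refine Finset.sum_congr rfl fun e _ => ?_
  change (G.len e)⁻¹ * (dipole (G.quotMap r (G.ends e).1) (G.quotMap r (G.ends e).2) w *
    (x (G.ends e).1 - x (G.ends e).2)) = _
  rw [← sum_filter_dipole (G.quotMap r), Finset.sum_mul, Finset.mul_sum]

lemma Connected.lap_mulVec_potential (hG : G.Connected) (a b : G.V) :
    G.lap *ᵥ G.potential a b = dipole a b :=
  G.lap_isSymm.mulVec_mpinv_mulVec fun z hz => by
    rw [dipole_dotProduct, sub_eq_zero]
    exact hG.eq_of_lap_mulVec_eq_zero hz a b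

lemma Connected.res_eq_sub_of_lap_mulVec_eq_dipole (hG : G.Connected) {a b : G.V}
    {x : G.V → ℝ} (hx : G.lap *ᵥ x = dipole a b) : G.res a b = x a - x b := by
  have hconst := hG.eq_of_lap_mulVec_eq_zero (z := x - G.potential a b)
    (by rw [mulVec_sub, hx, hG.lap_mulVec_potential, sub_self]) a b
  rw [Pi.sub_apply, Pi.sub_apply] at hconst
  rw [res_eq_potential_sub]
  linarith

lemma Connected.res_pos (hG : G.Connected) {p q : G.V} (hpq : p ≠ q) : 0 < G.res p q := by
  have hLg := hG.lap_mulVec_potential p q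
  have henergy : G.potential p q ⬝ᵥ (G.lap *ᵥ G.potential p q) = G.res p q := by
    rw [hLg, dotProduct_comm, dipole_dotProduct, res_eq_potential_sub]
  refine lt_of_le_of_ne (henergy ▸ G.dotProduct_lap_mulVec_nonneg _) fun h => ?_
  have hzero := G.lap_mulVec_eq_zero_of_forall_eq
    (G.eq_of_dotProduct_lap_mulVec_eq_zero (henergy.trans h.symm))
  rw [hLg] at hzero
  simpa [dipole, ind, hpq] using congrFun hzero p

theorem Connected.res_eq_res_ident2_add (hG : G.Connected) {p q : G.V} (hpq : p ≠ q)
    (s t : G.V) :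
    G.res s t = (G.ident2 p q).res (G.ident2Map p q s) (G.ident2Map p q t) +
      (G.potential s t p - G.potential s t q) ^ 2 / G.res p q := by
  have hr : G.res p q ≠ 0 := (hG.res_pos hpq).ne'
  set c := (G.potential s t p - G.potential s t q) / G.res p q
  set x := G.potential s t - c • G.potential p q
  have hxpq : x p = x q := by
    have hc : c * (G.potential p q p - G.potential p q q) =
        G.potential s t p - G.potential s t q := by
      rw [← res_eq_potential_sub, div_mul_cancel₀ _ hr]
    simp only [x, Pi.sub_apply, Pi.smul_apply, smul_eq_mul]
    linarith
  have hLx : G.lap *ᵥ x = dipole s t - c • dipole p q := by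
    rw [mulVec_sub, mulVec_smul, hG.lap_mulVec_potential, hG.lap_mulVec_potential]
  have hshort : (G.quot fun a b => a = p ∧ b = q).lap *ᵥ
      Quot.lift x (fun a b h => h.1 ▸ h.2 ▸ hxpq) = dipole (G.quotMap _ s) (G.quotMap _ t) := by
    funext w
    rw [quot_lap_mulVec_lift, hLx]
    simp only [Pi.sub_apply, Pi.smul_apply, smul_eq_mul, Finset.sum_sub_distrib,
      ← Finset.mul_sum, sum_filter_dipole]
    rw [show G.quotMap _ p = G.quotMap _ q from Quot.sound ⟨rfl, rfl⟩, dipole_self]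
    simp
  have hres : (G.ident2 p q).res (G.ident2Map p q s) (G.ident2Map p q t) = x s - x t :=
    (hG.quot _).res_eq_sub_of_lap_mulVec_eq_dipole hshort
  have hrecip := G.potential_sub_potential_comm p q s t
  rw [hres, G.res_eq_potential_sub s t]
  simp only [x, c, Pi.sub_apply, Pi.smul_apply, smul_eq_mul]
  linear_combination ((G.potential s t p - G.potential s t q) / G.res p q) * hrecip

end WMG

/-- **Explicit Rayleigh's Shorting Law.**  For a finite connected weighted
graph `G` and vertices `p ≠ q`, `s`, `t`:
`r(s,t) = r_{G_{pq}}(s,t) + (1/r(p,q)) (j_p(q,s) - j_p(q,t))²`; in particular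
`r(s,t) ≥ r_{G_{pq}}(s,t)` with equality iff `j_p(q,s) = j_p(q,t)`. -/
theorem explicit_rayleigh_shorting_law (G : WMG) (hG : G.Connected)
    (p q s t : G.V) (hpq : p ≠ q) :
    G.res s t = (G.ident2 p q).res (G.ident2Map p q s) (G.ident2Map p q t) +
        (1 / G.res p q) * (G.volt p q s - G.volt p q t) ^ 2 ∧
    (G.ident2 p q).res (G.ident2Map p q s) (G.ident2Map p q t) ≤ G.res s t ∧
    (G.res s t = (G.ident2 p q).res (G.ident2Map p q s) (G.ident2Map p q t) ↔
      G.volt p q s = G.volt p q t) := by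
  have hr := hG.res_pos hpq
  have hlaw : G.res s t = (G.ident2 p q).res (G.ident2Map p q s) (G.ident2Map p q t) +
      (1 / G.res p q) * (G.volt p q s - G.volt p q t) ^ 2 := by
    rw [hG.res_eq_res_ident2_add hpq s t, G.volt_sub_volt]
    ring
  refine ⟨hlaw, ?_, ?_⟩
  · rw [hlaw]
    exact le_add_of_nonneg_right (by positivity)
  · rw [hlaw, add_eq_left]
    simp [hr.ne', sub_eq_zero]
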